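/- Let S be a Cu-semigroup and let x, y be full elements of S. Then: (1) if rc(S, x) < ∞ and λ(y) ∈ {0, ∞} for every λ ∈ F(S), then rc(S, y) = 0; (2) if rc(S, x) < ∞, then rc(S, ∞·x) = 0. -/

import Mathlib

open scoped ENNReal

/-- `x' ≪ x`: for every increasing sequence whose supremum is `≥ x`,
some term of the sequence dominates `x'`. -/
def CuWayBelow {S : Type*} [Preorder S] (x' x : S) : Prop :=
  ∀ f : ℕ → S, Monotone f → ∀ s : S, IsLUB (Set.range f) s → x ≤ s → ∃ n, x' ≤ f n

/-- A `Cu`-semigroup: a partially ordered abelian monoid whose least element is `0`,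
satisfying the axioms (O1)–(O4). -/
class CuSemigroup (S : Type*) extends AddCommMonoid S, PartialOrder S, IsOrderedAddMonoid S where
  zero_le : ∀ x : S, 0 ≤ x
  O1 : ∀ f : ℕ → S, Monotone f → ∃ s : S, IsLUB (Set.range f) s
  O2 : ∀ x : S, ∃ f : ℕ → S, (∀ n, CuWayBelow (f n) (f (n + 1))) ∧ IsLUB (Set.range f) x
  O3 : ∀ {x' x y' y : S}, CuWayBelow x' x → CuWayBelow y' y → CuWayBelow (x' + y') (x + y)
  O4 : ∀ f g : ℕ → S, Monotone f → Monotone g → ∀ a b : S,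
      IsLUB (Set.range f) a → IsLUB (Set.range g) b →
      IsLUB (Set.range fun n => f n + g n) (a + b)

/-- A functional on a `Cu`-semigroup: a map `S → [0,∞]` which is additive, order
preserving, sends `0` to `0`, and preserves suprema of increasing sequences. -/
structure IsCuFunctional {S : Type*} [CuSemigroup S] (Λ : S → ℝ≥0∞) : Prop where
  map_zero : Λ 0 = 0
  map_add : ∀ x y : S, Λ (x + y) = Λ x + Λ y
  mono : Monotone Λ
  map_sup : ∀ f : ℕ → S, Monotone f → ∀ s : S, IsLUB (Set.range f) s → Λ s = ⨆ n, Λ (f n)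

/-- `x` is full if `∞ · x = sup_n (n • x)` is the largest element of `S`. -/
def IsFull {S : Type*} [CuSemigroup S] (x : S) : Prop :=
  ∀ s : S, IsLUB (Set.range fun n : ℕ => n • x) s → ∀ y : S, y ≤ s

/-- `F_w(S) ≠ ∅`: there exists a functional normalized at `w`. -/
def FNormNonempty {S : Type*} [CuSemigroup S] (w : S) : Prop :=
  ∃ Λ : S → ℝ≥0∞, IsCuFunctional Λ ∧ Λ w = 1

/-- The rank ratio `ρ(x, y)`: the infimum of all `r ∈ (0,∞)` with
`λ(x) ≤ r·λ(y)` for every functional `λ`; `∞` if there is no such `r`. -/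
noncomputable def rankRatio {S : Type*} [CuSemigroup S] (x y : S) : ℝ≥0∞ :=
  sInf {r : ℝ≥0∞ | 0 < r ∧ r ≠ ⊤ ∧ ∀ Λ : S → ℝ≥0∞, IsCuFunctional Λ → Λ x ≤ r * Λ y}

/-- `S` has `r`-comparison relative to `w`. -/
def HasRComparison {S : Type*} [CuSemigroup S] (r : ℝ≥0∞) (w : S) : Prop :=
  ∀ x y : S, (∀ Λ : S → ℝ≥0∞, IsCuFunctional Λ → Λ x + r * Λ w ≤ Λ y) → x ≤ y

/-- The radius of comparison of `S` relative to `w`: the infimum of all `r ∈ (0,∞)`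
for which `S` has `r`-comparison relative to `w`; `∞` if there is no such `r`. -/
noncomputable def rc {S : Type*} [CuSemigroup S] (w : S) : ℝ≥0∞ :=
  sInf {r : ℝ≥0∞ | 0 < r ∧ r ≠ ⊤ ∧ HasRComparison r w}

/-!
If every functional takes only the values `0` and `∞` on a full element `w`, then the hypothesis
`λ(a) + ε·λ(w) ≤ λ(b)` of `ε`-comparison relative to `w` already gives
`λ(a) + r·λ(x) ≤ λ(b)` for any `r`: where `λ(w) = ∞` it forces `λ(b) = ∞`, and where `λ(w) = 0`
fullness of `w` forces `λ = 0`. So `r`-comparison relative to `x` yields `ε`-comparison relative to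
`w` for every `ε > 0`. For `w = ∞·x` the dichotomy holds because `λ(∞·x) = sup_n n·λ(x)`.
-/

namespace CuSemigroup

variable {S : Type*} [CuSemigroup S]

lemma nsmul_monotone (w : S) : Monotone fun n : ℕ => n • w :=
  nsmul_left_monotone (zero_le w)

lemma isFull_of_isLUB_nsmul {x s : S} (hx : IsFull x)
    (hs : IsLUB (Set.range fun n : ℕ => n • x) s) : IsFull s := fun _ ht z =>
  (hx s hs z).trans (ht.1 ⟨1, one_nsmul s⟩)

lemma exists_hasRComparison_of_rc_ne_top {w : S} (h : rc w ≠ ⊤) :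
    ∃ r, HasRComparison r w := by
  by_contra! hno
  exact h (sInf_eq_top.2 fun r hr => (hno r hr.2.2).elim)

lemma rc_eq_zero_of_forall_hasRComparison {w : S}
    (h : ∀ ε : ℝ≥0∞, 0 < ε → ε ≠ ⊤ → HasRComparison ε w) : rc w = 0 := by
  refine le_antisymm (ENNReal.le_of_forall_pos_le_add fun ε hε _ => ?_) bot_le
  rw [zero_add]
  have hε' : (0 : ℝ≥0∞) < ε := ENNReal.coe_pos.2 hε
  exact sInf_le ⟨hε', ENNReal.coe_ne_top, h ε hε' ENNReal.coe_ne_top⟩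

end CuSemigroup

namespace IsCuFunctional

variable {S : Type*} [CuSemigroup S] {Λ : S → ℝ≥0∞}

lemma map_nsmul (hΛ : IsCuFunctional Λ) (w : S) (n : ℕ) : Λ (n • w) = n * Λ w := by
  induction n with
  | zero => simp [hΛ.map_zero]
  | succ n ih => rw [succ_nsmul, hΛ.map_add, ih, Nat.cast_succ, add_mul, one_mul]

lemma map_eq_iSup_nsmul (hΛ : IsCuFunctional Λ) {w s : S}
    (hs : IsLUB (Set.range fun n : ℕ => n • w) s) : Λ s = ⨆ n : ℕ, (n : ℝ≥0∞) * Λ w := by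
  simp only [hΛ.map_sup _ (CuSemigroup.nsmul_monotone w) s hs, hΛ.map_nsmul]

lemma map_isLUB_nsmul_eq_zero_or_top (hΛ : IsCuFunctional Λ) {w s : S}
    (hs : IsLUB (Set.range fun n : ℕ => n • w) s) : Λ s = 0 ∨ Λ s = ⊤ := by
  rw [hΛ.map_eq_iSup_nsmul hs, ← ENNReal.iSup_mul, ENNReal.iSup_natCast]
  rcases eq_or_ne (Λ w) 0 with h | h
  · exact Or.inl (by rw [h, mul_zero])
  · exact Or.inr (ENNReal.top_mul h)

lemma eq_zero_of_isFull (hΛ : IsCuFunctional Λ) {w : S} (hw : IsFull w) (h : Λ w = 0)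
    (z : S) : Λ z = 0 := by
  obtain ⟨s, hs⟩ := CuSemigroup.O1 _ (CuSemigroup.nsmul_monotone w)
  have hΛs : Λ s = 0 := by simp [hΛ.map_eq_iSup_nsmul hs, h]
  exact le_antisymm (hΛs ▸ hΛ.mono (hw s hs z)) bot_le

end IsCuFunctional

namespace CuSemigroup

variable {S : Type*} [CuSemigroup S]

lemma hasRComparison_of_map_eq_zero_or_top {r ε : ℝ≥0∞} {x w : S} (hr : HasRComparison r x)
    (hε : ε ≠ 0) (hw : IsFull w)
    (h0 : ∀ Λ : S → ℝ≥0∞, IsCuFunctional Λ → Λ w = 0 ∨ Λ w = ⊤) : HasRComparison ε w := by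
  intro a b hab
  refine hr a b fun Λ hΛ => ?_
  rcases h0 Λ hΛ with hΛw | hΛw
  · simp [hΛ.eq_zero_of_isFull hw hΛw]
  · have hb := hab Λ hΛ
    rw [hΛw, ENNReal.mul_top hε, add_top, top_le_iff] at hb
    simp [hb]

lemma rc_eq_zero_of_map_eq_zero_or_top {x w : S} (hx : rc x ≠ ⊤) (hw : IsFull w)
    (h0 : ∀ Λ : S → ℝ≥0∞, IsCuFunctional Λ → Λ w = 0 ∨ Λ w = ⊤) : rc w = 0 := by
  obtain ⟨r, hr⟩ := exists_hasRComparison_of_rc_ne_top hx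
  exact rc_eq_zero_of_forall_hasRComparison fun ε hε _ =>
    hasRComparison_of_map_eq_zero_or_top hr hε.ne' hw h0

end CuSemigroup

/-- Proposition (rcProperties, parts (4)-(5)): for full elements `x, y`:
(1) if `rc(S,x) < ∞` and `λ(y) ∈ {0, ∞}` for every functional `λ`, then
`rc(S,y) = 0`;
(2) if `rc(S,x) < ∞`, then `rc(S, ∞·x) = 0`. -/
theorem stmt15 {S : Type*} [CuSemigroup S] (x y : S)
    (hx : IsFull x) (hy : IsFull y) :
    (rc x ≠ ⊤ → (∀ Λ : S → ℝ≥0∞, IsCuFunctional Λ → Λ y = 0 ∨ Λ y = ⊤) → rc y = 0) ∧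
      (rc x ≠ ⊤ →
        ∀ s : S, IsLUB (Set.range fun n : ℕ => n • x) s → rc s = 0) :=
  ⟨fun hrx h0 => CuSemigroup.rc_eq_zero_of_map_eq_zero_or_top hrx hy h0,
    fun hrx s hs => CuSemigroup.rc_eq_zero_of_map_eq_zero_or_top hrx
      (CuSemigroup.isFull_of_isLUB_nsmul hx hs)
      fun _ hΛ => hΛ.map_isLUB_nsmul_eq_zero_or_top hs⟩
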